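/- The probability that two uniformly random odd integers from {1,...,2n-1} are coprime tends to 8/π² as n → ∞, i.e., (1/n²)·#{(i,j) : i,j odd, 1 ≤ i,j ≤ 2n-1, gcd(i,j) = 1} → 8/π². -/

import Mathlib

/-!
Let `A_d(n)` be the number of odd multiples of `d` in `[1, 2n - 1]`. Möbius inversion over the
gcd gives `#{coprime odd pairs} = ∑_d μ(d) A_d(n)²`. For odd `d` the odd multiples are the
`d (2j + 1)` with `j < (n + ⌊d/2⌋) / d`, so `A_d(n) / n → 1 / d`, while `A_d(n) = 0` for even `d`;
since `A_d(n) / n ≤ 2 / d` uniformly, dominated convergence turns the normalized count into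
`∑_{d odd} μ(d) / d²`. Because `μ(2m) = -μ(m)` for odd `m` and `μ(2m) = 0` for even `m`, the full
sum `∑_d μ(d) / d² = 1 / ζ(2) = 6 / π²` is `(1 - 1/4)` times the odd part, which is thus `8 / π²`.
-/

open Filter Finset ArithmeticFunction Topology
open scoped ArithmeticFunction.Moebius

theorem sum_divisors_moebius {R : Type*} [Ring R] (n : ℕ) :
    ∑ d ∈ n.divisors, (μ d : R) = if n = 1 then 1 else 0 := by
  rw [← one_apply (R := R), ← coe_moebius_mul_coe_zeta, coe_mul_zeta_apply]
  simp only [intCoe_apply]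

theorem card_filter_coprime_eq_sum_moebius {R : Type*} [CommRing R] (s : Finset ℕ) {N : ℕ}
    (hs : s ⊆ Icc 1 N) :
    (#{p ∈ s ×ˢ s | Nat.Coprime p.1 p.2} : R) =
      ∑ d ∈ Icc 1 N, (μ d : R) * #{a ∈ s | d ∣ a} ^ 2 := by
  have hcoprime : ∀ p ∈ s ×ˢ s, (if Nat.Coprime p.1 p.2 then (1 : R) else 0) =
      ∑ d ∈ Icc 1 N, if d ∣ p.1 ∧ d ∣ p.2 then (μ d : R) else 0 := by
    rintro ⟨a, b⟩ hp
    have ha := mem_Icc.mp (hs (mem_product.mp hp).1)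
    have hdiv : (a.gcd b).divisors = {d ∈ Icc 1 N | d ∣ a ∧ d ∣ b} := by
      ext d
      simp only [Nat.mem_divisors, Nat.dvd_gcd_iff, mem_filter, mem_Icc]
      constructor
      · rintro ⟨hd, -⟩
        exact ⟨⟨Nat.pos_of_dvd_of_pos hd.1 ha.1, (Nat.le_of_dvd ha.1 hd.1).trans ha.2⟩, hd⟩
      · rintro ⟨-, hd⟩
        exact ⟨hd, (Nat.gcd_pos_of_pos_left b ha.1).ne'⟩
    rw [← sum_filter, ← hdiv, sum_divisors_moebius]
  calc (#{p ∈ s ×ˢ s | Nat.Coprime p.1 p.2} : R)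
      = ∑ p ∈ s ×ˢ s, if Nat.Coprime p.1 p.2 then (1 : R) else 0 := (sum_boole _ _).symm
    _ = ∑ d ∈ Icc 1 N, ∑ p ∈ s ×ˢ s, if d ∣ p.1 ∧ d ∣ p.2 then (μ d : R) else 0 := by
      rw [sum_congr rfl hcoprime, sum_comm]
    _ = ∑ d ∈ Icc 1 N, (μ d : R) * #{a ∈ s | d ∣ a} ^ 2 := by
      refine sum_congr rfl fun d _ => ?_
      rw [← sum_filter, sum_const, filter_product, card_product, nsmul_eq_mul]
      push_cast
      ring

theorem filter_dvd_eq_empty {s : Finset ℕ} {N d : ℕ} (hs : s ⊆ Icc 1 N) (hd : d ∉ Icc 1 N) :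
    {a ∈ s | d ∣ a} = ∅ := by
  refine filter_false_of_mem fun a ha hda => hd ?_
  have ha := mem_Icc.mp (hs ha)
  exact mem_Icc.mpr ⟨Nat.pos_of_dvd_of_pos hda ha.1, (Nat.le_of_dvd ha.1 hda).trans ha.2⟩

theorem moebius_two_mul (m : ℕ) : μ (2 * m) = if Odd m then -μ m else 0 := by
  split_ifs with hm
  · rw [isMultiplicative_moebius.map_mul_of_coprime (Nat.coprime_two_left.mpr hm),
      moebius_apply_prime Nat.prime_two, neg_one_mul]
  · obtain ⟨k, rfl⟩ := Nat.not_odd_iff_even.mp hm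
    refine moebius_eq_zero_of_not_squarefree fun hsq => ?_
    exact Nat.prime_two.not_isUnit (hsq 2 ⟨k, by ring⟩)

theorem hasSum_moebius_div_sq :
    HasSum (fun n : ℕ => (μ n : ℝ) / n ^ 2) (6 / Real.pi ^ 2) := by
  have hs : 1 < (2 : ℂ).re := by norm_num
  have hL : LSeries (fun n => (μ n : ℂ)) 2 = ((6 / Real.pi ^ 2 : ℝ) : ℂ) := by
    have h := LSeries_zeta_mul_Lseries_moebius hs
    rw [LSeries_zeta_eq_riemannZeta hs, riemannZeta_two] at h
    push_cast
    rw [eq_div_iff (pow_ne_zero 2 (Complex.ofReal_ne_zero.mpr Real.pi_ne_zero))]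
    linear_combination 6 * h
  have hsum : LSeriesHasSum (fun n => (μ n : ℂ)) 2 ((6 / Real.pi ^ 2 : ℝ) : ℂ) :=
    hL ▸ (LSeriesSummable_moebius_iff.mpr hs).LSeriesHasSum
  refine (Complex.hasSum_re hsum).congr_fun fun n => ?_
  rcases eq_or_ne n 0 with rfl | hn
  · simp
  · rw [LSeries.term_of_ne_zero hn, Complex.cpow_ofNat]
    norm_cast

theorem hasSum_odd_moebius_div_sq :
    HasSum (fun n : ℕ => if Odd n then (μ n : ℝ) / n ^ 2 else 0) (8 / Real.pi ^ 2) := by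
  set g : ℕ → ℝ := fun n => if Odd n then (μ n : ℝ) / n ^ 2 else 0
  obtain ⟨T, hT⟩ : Summable g := by
    exact (hasSum_moebius_div_sq.summable.indicator {n | Odd n}).congr fun n => by
      simp [g, Set.indicator_apply]
  have heven : HasSum (fun n : ℕ => if Odd n then 0 else (μ n : ℝ) / n ^ 2) (-(T / 4)) := by
    rw [← (mul_right_injective₀ (two_ne_zero' ℕ)).hasSum_iff]
    · refine (hT.div_const 4).neg.congr_fun fun m => ?_
      rw [Function.comp_apply, if_neg (Nat.not_odd_iff_even.mpr (even_two_mul m)),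
        moebius_two_mul]
      simp only [g]
      split_ifs
      · push_cast
        ring
      · simp
    · intro n hn
      rw [if_pos (Nat.not_even_iff_odd.mp fun ⟨k, hk⟩ => hn ⟨k, show 2 * k = n by omega⟩)]
  have hfull : T - T / 4 = 6 / Real.pi ^ 2 := by
    refine (hT.add heven).unique (hasSum_moebius_div_sq.congr_fun fun n => ?_)
    simp only [g]
    split_ifs <;> simp
  convert hT
  linear_combination (-4 / 3 : ℝ) * hfull

theorem abs_moebius_mul_sq_le (d : ℕ) {x y : ℝ} (hx : 0 ≤ x) (hxy : x ≤ y) :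
    |(μ d : ℝ) * x ^ 2| ≤ y ^ 2 := by
  rw [abs_mul, abs_sq]
  have hμ : |(μ d : ℝ)| ≤ 1 := by exact_mod_cast abs_moebius_le_one
  exact (mul_le_mul hμ (pow_le_pow_left₀ hx hxy 2) (sq_nonneg x) zero_le_one).trans_eq (one_mul _)

theorem tendsto_natCast_add_div_div_atTop (k : ℕ) {d : ℕ} (hd : 0 < d) :
    Tendsto (fun n : ℕ => (((n + k) / d : ℕ) : ℝ) / n) atTop (𝓝 (1 / d)) := by
  have hinv := tendsto_one_div_atTop_nhds_zero_nat (𝕜 := ℝ)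
  have hlower : Tendsto (fun n : ℕ => 1 / (d : ℝ) - 1 / n) atTop (𝓝 (1 / d)) := by
    simpa using tendsto_const_nhds.sub hinv
  have hupper : Tendsto (fun n : ℕ => 1 / (d : ℝ) + k / d * (1 / n)) atTop (𝓝 (1 / d)) := by
    simpa using tendsto_const_nhds.add (hinv.const_mul (k / d : ℝ))
  refine tendsto_of_tendsto_of_tendsto_of_le_of_le' hlower hupper ?_ ?_ <;>
    filter_upwards [eventually_gt_atTop 0] with n hn
  · have hq : ((n + k : ℕ) : ℝ) < ((n + k) / d : ℕ) * d + d := by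
      exact_mod_cast Nat.lt_div_mul_add hd
    rw [le_div_iff₀ (Nat.cast_pos.mpr hn)]
    push_cast at hq
    field_simp
    nlinarith
  · have hq : (((n + k) / d : ℕ) : ℝ) ≤ ((n + k : ℕ) : ℝ) / d := Nat.cast_div_le
    rw [div_le_iff₀ (Nat.cast_pos.mpr hn)]
    push_cast at hq
    calc _ ≤ ((n : ℝ) + k) / d := hq
      _ = _ := by field_simp

def firstOdds (n : ℕ) : Finset ℕ := {x ∈ Icc 1 (2 * n - 1) | Odd x}

theorem firstOdds_subset_Icc (n : ℕ) : firstOdds n ⊆ Icc 1 (2 * n - 1) := filter_subset _ _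

theorem filter_coprime_firstOdds (n : ℕ) :
    {p ∈ Icc 1 (2 * n - 1) ×ˢ Icc 1 (2 * n - 1) | Odd p.1 ∧ Odd p.2 ∧ Nat.gcd p.1 p.2 = 1} =
      {p ∈ firstOdds n ×ˢ firstOdds n | Nat.Coprime p.1 p.2} := by
  ext ⟨a, b⟩
  simp only [firstOdds, mem_filter, mem_product, Nat.coprime_iff_gcd_eq_one]
  tauto

theorem card_filter_dvd_firstOdds_mul_le (n d : ℕ) : #{x ∈ firstOdds n | d ∣ x} * d ≤ 2 * n :=
  calc #{x ∈ firstOdds n | d ∣ x} * d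
      ≤ #{x ∈ Ioc 0 (2 * n - 1) | d ∣ x} * d := by
        refine Nat.mul_le_mul_right _ (card_le_card fun x => ?_)
        simp only [firstOdds, mem_filter, mem_Icc, mem_Ioc]
        omega
    _ = (2 * n - 1) / d * d := by rw [Nat.Ioc_filter_dvd_card_eq_div]
    _ ≤ 2 * n := (Nat.div_mul_le_self _ _).trans (Nat.sub_le _ _)

theorem card_filter_dvd_firstOdds {d : ℕ} (hd : Odd d) (n : ℕ) :
    #{x ∈ firstOdds n | d ∣ x} = (n + d / 2) / d := by
  obtain ⟨c, rfl⟩ := hd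
  have hmul : ∀ j, j < (n + (2 * c + 1) / 2) / (2 * c + 1) ↔
      (2 * c + 1) * (2 * j + 1) ≤ 2 * n - 1 := by
    intro j
    rw [← Nat.add_one_le_iff, Nat.le_div_iff_mul_le (by omega)]
    constructor <;> intro h <;> ring_nf at h ⊢ <;> omega
  have hset : {x ∈ firstOdds n | (2 * c + 1) ∣ x} =
      (range ((n + (2 * c + 1) / 2) / (2 * c + 1))).map
        ⟨fun j => (2 * c + 1) * (2 * j + 1), fun i j h => by simp at h; omega⟩ := by
    ext x
    simp only [firstOdds, mem_filter, mem_Icc, Finset.mem_map, mem_range, hmul]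
    constructor
    · rintro ⟨⟨⟨-, hx⟩, hodd⟩, k, rfl⟩
      obtain ⟨j, rfl⟩ := (Nat.odd_mul.mp hodd).2
      exact ⟨j, by omega, rfl⟩
    · rintro ⟨j, hj, rfl⟩
      have hodd := Nat.odd_mul.mpr ⟨odd_two_mul_add_one c, odd_two_mul_add_one j⟩
      exact ⟨⟨⟨hodd.pos, hj⟩, hodd⟩, dvd_mul_right _ _⟩
  rw [hset, card_map, card_range]

theorem card_filter_dvd_firstOdds_div_le (n d : ℕ) :
    (#{x ∈ firstOdds n | d ∣ x} : ℝ) / n ≤ 2 / d := by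
  rcases Nat.eq_zero_or_pos n with rfl | hn
  · rw [Nat.cast_zero, div_zero]
    positivity
  rcases Nat.eq_zero_or_pos d with rfl | hd
  · rw [filter_dvd_eq_empty (firstOdds_subset_Icc n) (by simp : 0 ∉ Icc 1 (2 * n - 1))]
    simp
  rw [div_le_div_iff₀ (by positivity) (by positivity)]
  exact_mod_cast card_filter_dvd_firstOdds_mul_le n d

theorem tendsto_card_filter_dvd_firstOdds_div (d : ℕ) :
    Tendsto (fun n : ℕ => (#{x ∈ firstOdds n | d ∣ x} : ℝ) / n) atTop
      (𝓝 (if Odd d then 1 / d else 0)) := by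
  split_ifs with hd
  · simpa only [card_filter_dvd_firstOdds hd] using tendsto_natCast_add_div_div_atTop _ hd.pos
  · have hempty : ∀ n, {x ∈ firstOdds n | d ∣ x} = ∅ := fun n =>
      filter_false_of_mem fun x hx hdx => hd ((mem_filter.mp hx).2.of_dvd_nat hdx)
    simp [hempty]

theorem coprime_odd_probability :
    Tendsto (fun n : ℕ =>
      (((Finset.Icc 1 (2 * n - 1) ×ˢ Finset.Icc 1 (2 * n - 1)).filter
          (fun p : ℕ × ℕ => Odd p.1 ∧ Odd p.2 ∧ Nat.gcd p.1 p.2 = 1)).card : ℝ) / (n : ℝ) ^ 2)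
      atTop (nhds (8 / Real.pi ^ 2)) := by
  set F : ℕ → ℕ → ℝ := fun n d => (μ d : ℝ) * ((#{x ∈ firstOdds n | d ∣ x} : ℝ) / n) ^ 2
  have hcount : ∀ n : ℕ, (#{p ∈ Icc 1 (2 * n - 1) ×ˢ Icc 1 (2 * n - 1) |
      Odd p.1 ∧ Odd p.2 ∧ Nat.gcd p.1 p.2 = 1} : ℝ) / n ^ 2 = ∑' d, F n d := by
    intro n
    have hs := firstOdds_subset_Icc n
    rw [filter_coprime_firstOdds, card_filter_coprime_eq_sum_moebius _ hs, sum_div,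
      tsum_eq_sum fun d hd => by simp [F, filter_dvd_eq_empty hs hd]]
    exact sum_congr rfl fun d _ => by simp only [F]; ring
  have hlimit : ∀ d, Tendsto (F · d) atTop (𝓝 (if Odd d then (μ d : ℝ) / d ^ 2 else 0)) := by
    intro d
    convert ((tendsto_card_filter_dvd_firstOdds_div d).pow 2).const_mul (μ d : ℝ) using 2
    split_ifs <;> simp [div_eq_mul_inv]
  have hbound : ∀ n d, ‖F n d‖ ≤ (2 / d) ^ 2 := fun n d =>
    abs_moebius_mul_sq_le d (by positivity) (card_filter_dvd_firstOdds_div_le n d)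
  have hsummable : Summable fun d : ℕ => ((2 : ℝ) / d) ^ 2 :=
    (hasSum_zeta_two.summable.mul_left 4).congr fun d => by ring
  rw [← hasSum_odd_moebius_div_sq.tsum_eq]
  exact (tendsto_tsum_of_dominated_convergence hsummable hlimit (.of_forall hbound)).congr
    fun n => (hcount n).symm
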